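/- With A(β) as above and β satisfying max_{j,k} |β_j − β_k| ≤ δ/r, all entries satisfy: for j ≠ k and j′ ≠ k′, e^{−4δ/r} ≤ a_{jk}/a_{j′k′} ≤ e^{4δ/r}; for the diagonal, e^{−4δ/r} ≤ a_{jj}/a_{kk} ≤ e^{4δ/r}. Furthermore (1/2) e^{−4δ/r} Λ(β) binom(n−2,r−2) ≤ a_{jk} ≤ (1/2) e^{4δ/r} Λ(β) binom(n−2,r−2) for j ≠ k, and (1/2) e^{−4δ/r} Λ(β) binom(n−1,r−1) ≤ a_{jj} ≤ (1/2) e^{4δ/r} Λ(β) binom(n−1,r−1). -/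

import Mathlib

noncomputable def lamW {n : ℕ} (β : Fin n → ℝ) (W : Finset (Fin n)) : ℝ :=
  Real.exp (∑ j ∈ W, β j) / (1 + Real.exp (∑ j ∈ W, β j))

noncomputable def LamAvg (n r : ℕ) (β : Fin n → ℝ) : ℝ :=
  (n.choose r : ℝ)⁻¹ *
    ∑ W ∈ Finset.powersetCard r (Finset.univ : Finset (Fin n)), lamW β W * (1 - lamW β W)

noncomputable def matA (n r : ℕ) (β : Fin n → ℝ) : Matrix (Fin n) (Fin n) ℝ :=
  Matrix.of fun j k =>
    if j = k then
      (1 / 2) * ∑ W ∈ (Finset.powersetCard r (Finset.univ : Finset (Fin n))).filter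
        (fun W => j ∈ W), lamW β W * (1 - lamW β W)
    else
      (1 / 2) * ∑ W ∈ (Finset.powersetCard r (Finset.univ : Finset (Fin n))).filter
        (fun W => j ∈ W ∧ k ∈ W), lamW β W * (1 - lamW β W)

/-! With `t = ∑ j ∈ W, β j` one has `λ_W (1 - λ_W) = σ(t) σ(-t)`. When `t` moves to `t'`, one of
the two factors moves in the favourable direction and the other grows by at most `e^{|t - t'|}`.
A permutation moving at most four indices carries the `r`-sets containing `{j, k}` onto those
containing `{j', k'}` and changes every such `t` by at most `4δ/r`; this gives the ratio bounds.
Summing over all `m`-sets (`m = 1, 2`) counts every `r`-set `binom(r, m)` times, and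
`binom(n, r) binom(r, m) = binom(n, m) binom(n - m, r - m)` turns the average into
`Λ binom(n - m, r - m)`. -/
open Finset Real Equiv

lemma sigmoid_le_exp_sub_mul_sigmoid {x y : ℝ} (h : y ≤ x) :
    sigmoid x ≤ exp (x - y) * sigmoid y := by
  have hexp : exp (-x) * exp (x - y) = exp (-y) := by rw [← exp_add]; ring_nf
  have hone : 1 ≤ exp (x - y) := one_le_exp (sub_nonneg.2 h)
  rw [sigmoid_def, sigmoid_def, ← div_eq_mul_inv, le_div_iff₀ (by positivity),
    inv_mul_le_iff₀ (by positivity)]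
  linarith

lemma sigmoid_mul_one_sub_le_exp_mul {s t c : ℝ} (h : |s - t| ≤ c) :
    sigmoid s * (1 - sigmoid s) ≤ exp c * (sigmoid t * (1 - sigmoid t)) := by
  rw [← sigmoid_neg, ← sigmoid_neg]
  rcases le_total s t with hst | hts
  · have h₁ : sigmoid s ≤ sigmoid t := sigmoid_le hst
    have h₂ : sigmoid (-s) ≤ exp c * sigmoid (-t) :=
      (sigmoid_le_exp_sub_mul_sigmoid (neg_le_neg hst)).trans <|
        mul_le_mul_of_nonneg_right (exp_le_exp.2 (by linarith [neg_abs_le (s - t)]))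
          (sigmoid_nonneg _)
    calc sigmoid s * sigmoid (-s) ≤ sigmoid t * (exp c * sigmoid (-t)) :=
          mul_le_mul h₁ h₂ (sigmoid_nonneg _) (sigmoid_nonneg _)
      _ = _ := by ring
  · have h₁ : sigmoid s ≤ exp c * sigmoid t :=
      (sigmoid_le_exp_sub_mul_sigmoid hts).trans <|
        mul_le_mul_of_nonneg_right (exp_le_exp.2 (by linarith [le_abs_self (s - t)]))
          (sigmoid_nonneg _)
    have h₂ : sigmoid (-s) ≤ sigmoid (-t) := sigmoid_le (neg_le_neg hts)
    calc sigmoid s * sigmoid (-s) ≤ exp c * sigmoid t * sigmoid (-t) :=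
          mul_le_mul h₁ h₂ (sigmoid_nonneg _) (by have := sigmoid_pos t; positivity)
      _ = _ := by ring

lemma div_mem_exp_bounds {x y c : ℝ} (hy : 0 < y) (hxy : x ≤ exp c * y)
    (hyx : y ≤ exp c * x) : exp (-c) ≤ x / y ∧ x / y ≤ exp c := by
  rw [le_div_iff₀ hy, div_le_iff₀ hy, exp_neg, inv_mul_le_iff₀ (exp_pos c)]
  exact ⟨hyx, hxy⟩

lemma abs_sum_comp_perm_sub_sum_le {α : Type*} [DecidableEq α] [Fintype α] {β : α → ℝ} {d : ℝ}
    (hβ : ∀ j k, |β j - β k| ≤ d) (hd : 0 ≤ d) (σ : Perm α) (W : Finset α) :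
    |∑ i ∈ W, β i - ∑ i ∈ W, β (σ i)| ≤ #σ.support * d := by
  rw [← sum_sub_distrib, ← sum_filter_of_ne (p := (· ∈ σ.support))
    (fun i _ hi => Perm.mem_support.2 fun hσ => hi (by rw [hσ, sub_self]))]
  calc |∑ i ∈ W with i ∈ σ.support, (β i - β (σ i))|
      ≤ ∑ i ∈ W with i ∈ σ.support, |β i - β (σ i)| := abs_sum_le_sum_abs _ _
    _ ≤ ∑ i ∈ W with i ∈ σ.support, d := sum_le_sum fun i _ => hβ _ _
    _ ≤ #σ.support * d := by
      rw [sum_const, nsmul_eq_mul]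
      gcongr
      exact fun i hi => (mem_filter.1 hi).2

lemma Equiv.Perm.card_support_swap_le {α : Type*} [DecidableEq α] [Fintype α] (x y : α) :
    #(swap x y).support ≤ 2 := by
  rcases eq_or_ne x y with rfl | hxy
  · simp
  · exact (Perm.card_support_swap hxy).le

theorem Finset.exists_perm_map_eq_card_support_le {α : Type*} [DecidableEq α] [Fintype α]
    {s t : Finset α} (hst : #s = #t) :
    ∃ σ : Perm α, s.map σ.toEmbedding = t ∧ #σ.support ≤ 2 * #s := by
  induction s using Finset.induction_on generalizing t with
  | empty => exact ⟨1, by simpa [eq_comm] using hst, by simp⟩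
  | insert a s ha ih =>
    obtain ⟨b, hb⟩ : t.Nonempty := by rw [← card_pos, ← hst]; simp
    obtain ⟨σ, hσ, hσcard⟩ := ih (t := t.erase b) (by
      rw [card_erase_of_mem hb, ← hst, card_insert_of_notMem ha, Nat.add_sub_cancel])
    have hσa : σ a ∉ t.erase b := by
      rw [← hσ]
      simpa using ha
    refine ⟨swap (σ a) b * σ, ?_, ?_⟩
    · have hfix : ∀ x ∈ t.erase b, swap (σ a) b x = x := fun x hx =>
        swap_apply_of_ne_of_ne (ne_of_mem_of_not_mem hx hσa) (ne_of_mem_erase hx)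
      have hmap : (t.erase b).map (swap (σ a) b).toEmbedding = t.erase b := by
        rw [map_eq_image]
        exact (image_congr hfix).trans image_id'
      rw [Perm.mul_def, trans_toEmbedding, ← map_map, map_insert, hσ, map_insert, hmap]
      simpa using insert_erase hb
    · calc #(swap (σ a) b * σ).support ≤ #(swap (σ a) b).support + #σ.support :=
            (card_le_card (Perm.support_mul_le _ _)).trans (card_union_le _ _)
        _ ≤ 2 * #(insert a s) := by
          rw [card_insert_of_notMem ha]
          linarith [Perm.card_support_swap_le (σ a) b]

theorem Finset.sum_powersetCard_sum_filter_superset {α M : Type*} [DecidableEq α]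
    [AddCommMonoid M] (u : Finset α) (m r : ℕ) (f : Finset α → M) :
    ∑ s ∈ powersetCard m u, ∑ W ∈ powersetCard r u with s ⊆ W, f W =
      r.choose m • ∑ W ∈ powersetCard r u, f W := by
  rw [sum_comm' (t' := powersetCard r u) (s' := powersetCard m), smul_sum]
  · refine sum_congr rfl fun W hW => ?_
    rw [sum_const, card_powersetCard, (mem_powersetCard.1 hW).2]
  · intro s W
    simp only [mem_filter, mem_powersetCard]
    constructor
    · rintro ⟨⟨-, hs⟩, ⟨hWu, hW⟩, hsW⟩
      exact ⟨⟨hsW, hs⟩, hWu, hW⟩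
    · rintro ⟨⟨hsW, hs⟩, hWu, hW⟩
      exact ⟨⟨hsW.trans hWu, hs⟩, ⟨hWu, hW⟩, hsW⟩

lemma lamW_eq_sigmoid {n : ℕ} (β : Fin n → ℝ) (W : Finset (Fin n)) :
    lamW β W = sigmoid (∑ j ∈ W, β j) := by
  rw [lamW, sigmoid_def, exp_neg]
  field_simp
  ring

lemma lamW_mul_one_sub_pos {n : ℕ} (β : Fin n → ℝ) (W : Finset (Fin n)) :
    0 < lamW β W * (1 - lamW β W) := by
  rw [lamW_eq_sigmoid, ← sigmoid_neg]
  exact mul_pos (sigmoid_pos _) (sigmoid_pos _)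

noncomputable def supersetSum {n : ℕ} (r : ℕ) (β : Fin n → ℝ) (s : Finset (Fin n)) : ℝ :=
  ∑ W ∈ powersetCard r univ with s ⊆ W, lamW β W * (1 - lamW β W)

section supersetSum

variable {n r : ℕ} {β : Fin n → ℝ}

lemma matA_apply_of_ne {j k : Fin n} (h : j ≠ k) :
    matA n r β j k = supersetSum r β {j, k} / 2 := by
  simp only [matA, Matrix.of_apply, if_neg h, supersetSum, insert_subset_iff,
    singleton_subset_iff]
  ring

lemma matA_apply_self (j : Fin n) : matA n r β j j = supersetSum r β {j} / 2 := by
  rw [matA, Matrix.of_apply, if_pos rfl, supersetSum]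
  simp only [singleton_subset_iff]
  ring

lemma supersetSum_nonneg (s : Finset (Fin n)) : 0 ≤ supersetSum r β s :=
  sum_nonneg fun W _ => (lamW_mul_one_sub_pos β W).le

lemma supersetSum_pos {s : Finset (Fin n)} (hs : #s ≤ r) (hrn : r ≤ n) :
    0 < supersetSum r β s := by
  obtain ⟨W, hsW, -, hW⟩ := exists_subsuperset_card_eq (subset_univ s) hs (by simpa using hrn)
  exact sum_pos (fun V _ => lamW_mul_one_sub_pos β V) ⟨W, by simpa [hW] using hsW⟩

lemma supersetSum_le_exp_mul_map {d : ℝ} (hβ : ∀ j k, |β j - β k| ≤ d) (hd : 0 ≤ d)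
    (σ : Perm (Fin n)) (s : Finset (Fin n)) :
    supersetSum r β s ≤ exp (#σ.support * d) * supersetSum r β (s.map σ.toEmbedding) := by
  have hterm (W : Finset (Fin n)) : lamW β W * (1 - lamW β W) ≤ exp (#σ.support * d) *
      (lamW β (W.map σ.toEmbedding) * (1 - lamW β (W.map σ.toEmbedding))) := by
    simp only [lamW_eq_sigmoid, sum_map]
    exact sigmoid_mul_one_sub_le_exp_mul (abs_sum_comp_perm_sub_sum_le hβ hd σ W)
  calc supersetSum r β s
      ≤ ∑ W ∈ powersetCard r univ with s ⊆ W, exp (#σ.support * d) *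
          (lamW β (W.map σ.toEmbedding) * (1 - lamW β (W.map σ.toEmbedding))) :=
        sum_le_sum fun W _ => hterm W
    _ = _ := by
      rw [supersetSum, ← mul_sum]
      congr 1
      refine sum_equiv σ.finsetCongr (fun W => ?_) (fun W _ => rfl)
      simp [finsetCongr_apply]

lemma supersetSum_le_exp_mul {d c : ℝ} (hβ : ∀ j k, |β j - β k| ≤ d) (hd : 0 ≤ d)
    {s t : Finset (Fin n)} (hst : #s = #t) (hc : 2 * #s * d ≤ c) :
    supersetSum r β s ≤ exp c * supersetSum r β t := by
  obtain ⟨σ, rfl, hσ⟩ := exists_perm_map_eq_card_support_le hst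
  refine (supersetSum_le_exp_mul_map hβ hd σ s).trans <|
    mul_le_mul_of_nonneg_right (exp_le_exp.2 ?_) (supersetSum_nonneg _)
  calc (#σ.support : ℝ) * d ≤ ((2 * #s : ℕ) : ℝ) * d := by gcongr
    _ ≤ c := by push_cast; exact hc

lemma sum_supersetSum (m : ℕ) :
    ∑ s ∈ powersetCard m univ, supersetSum r β s =
      r.choose m * ∑ W ∈ powersetCard r univ, lamW β W * (1 - lamW β W) := by
  rw [← nsmul_eq_mul, ← sum_powersetCard_sum_filter_superset]
  rfl

lemma supersetSum_mem_bounds {m : ℕ} (hmr : m ≤ r) (hrn : r ≤ n) {c : ℝ}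
    (hcomp : ∀ s ∈ powersetCard m univ, ∀ t ∈ powersetCard m univ,
      supersetSum r β s ≤ exp c * supersetSum r β t)
    {s : Finset (Fin n)} (hs : s ∈ powersetCard m univ) :
    exp (-c) * LamAvg n r β * (n - m).choose (r - m) ≤ supersetSum r β s ∧
      supersetSum r β s ≤ exp c * LamAvg n r β * (n - m).choose (r - m) := by
  set T := ∑ W ∈ powersetCard r univ, lamW β W * (1 - lamW β W)
  have hnm : (0 : ℝ) < n.choose m := by exact_mod_cast Nat.choose_pos (hmr.trans hrn)
  have hnr : (n.choose r : ℝ) ≠ 0 := by exact_mod_cast (Nat.choose_pos hrn).ne'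
  have hΛ : n.choose m * (LamAvg n r β * (n - m).choose (r - m)) = r.choose m * T := by
    have hchoose : (n.choose r : ℝ) * r.choose m = n.choose m * (n - m).choose (r - m) := by
      exact_mod_cast Nat.choose_mul hmr
    have hLam : LamAvg n r β = (n.choose r : ℝ)⁻¹ * T := rfl
    rw [hLam]
    field_simp
    linear_combination -T * hchoose
  have hcard : ∑ _t ∈ powersetCard m (univ : Finset (Fin n)), supersetSum r β s =
      n.choose m * supersetSum r β s := by simp
  have hup : n.choose m * supersetSum r β s ≤ exp c * (r.choose m * T) := by
    rw [← hcard, ← sum_supersetSum, mul_sum]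
    exact sum_le_sum fun t ht => hcomp s hs t ht
  have hlow : r.choose m * T ≤ exp c * (n.choose m * supersetSum r β s) := by
    rw [← hcard, ← sum_supersetSum, mul_sum]
    exact sum_le_sum fun t ht => hcomp t ht s hs
  rw [← hΛ, mul_left_comm (exp c)] at hup
  rw [← hΛ, mul_left_comm (exp c)] at hlow
  rw [mul_assoc, mul_assoc, exp_neg, inv_mul_le_iff₀ (exp_pos c)]
  exact ⟨le_of_mul_le_mul_left hlow hnm, le_of_mul_le_mul_left hup hnm⟩

end supersetSum
theorem stmt10 (n r : ℕ) (hr : 2 ≤ r) (hrn : r ≤ n) (δ : ℝ) (hδ : 0 ≤ δ)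
    (β : Fin n → ℝ) (hβ : ∀ j k, |β j - β k| ≤ δ / r) :
    (∀ j k j' k' : Fin n, j ≠ k → j' ≠ k' →
      Real.exp (-(4 * δ / r)) ≤ matA n r β j k / matA n r β j' k' ∧
      matA n r β j k / matA n r β j' k' ≤ Real.exp (4 * δ / r)) ∧
    (∀ j k : Fin n,
      Real.exp (-(4 * δ / r)) ≤ matA n r β j j / matA n r β k k ∧
      matA n r β j j / matA n r β k k ≤ Real.exp (4 * δ / r)) ∧
    (∀ j k : Fin n, j ≠ k →
      (1 / 2) * Real.exp (-(4 * δ / r)) * LamAvg n r β * ((n - 2).choose (r - 2) : ℝ) ≤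
        matA n r β j k ∧
      matA n r β j k ≤
        (1 / 2) * Real.exp (4 * δ / r) * LamAvg n r β * ((n - 2).choose (r - 2) : ℝ)) ∧
    (∀ j : Fin n,
      (1 / 2) * Real.exp (-(4 * δ / r)) * LamAvg n r β * ((n - 1).choose (r - 1) : ℝ) ≤
        matA n r β j j ∧
      matA n r β j j ≤
        (1 / 2) * Real.exp (4 * δ / r) * LamAvg n r β * ((n - 1).choose (r - 1) : ℝ)) := by
  have hd : 0 ≤ δ / r := by positivity
  have hcomp {m : ℕ} (hm : m ≤ 2) : ∀ s ∈ powersetCard m univ, ∀ t ∈ powersetCard m univ,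
      supersetSum r β s ≤ exp (4 * δ / r) * supersetSum r β t := by
    intro s hs t ht
    rw [mem_powersetCard_univ] at hs ht
    refine supersetSum_le_exp_mul hβ hd (hs.trans ht.symm) ?_
    calc 2 * (#s : ℝ) * (δ / r) ≤ 2 * 2 * (δ / r) := by gcongr; exact_mod_cast hs.trans_le hm
      _ = 4 * δ / r := by ring
  have hpair {j k : Fin n} (h : j ≠ k) : {j, k} ∈ powersetCard 2 univ :=
    mem_powersetCard_univ.2 (card_pair h)
  have hsingleton (j : Fin n) : {j} ∈ powersetCard 1 univ :=
    mem_powersetCard_univ.2 (card_singleton j)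
  refine ⟨fun j k j' k' hjk hjk' => ?_, fun j k => ?_, fun j k hjk => ?_, fun j => ?_⟩
  · rw [matA_apply_of_ne hjk, matA_apply_of_ne hjk', div_div_div_cancel_right₀ two_ne_zero]
    exact div_mem_exp_bounds (supersetSum_pos (by rwa [card_pair hjk']) hrn)
      (hcomp le_rfl _ (hpair hjk) _ (hpair hjk')) (hcomp le_rfl _ (hpair hjk') _ (hpair hjk))
  · rw [matA_apply_self, matA_apply_self, div_div_div_cancel_right₀ two_ne_zero]
    exact div_mem_exp_bounds (supersetSum_pos (by rw [card_singleton]; omega) hrn)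
      (hcomp one_le_two _ (hsingleton j) _ (hsingleton k))
      (hcomp one_le_two _ (hsingleton k) _ (hsingleton j))
  · obtain ⟨hlow, hup⟩ := supersetSum_mem_bounds hr hrn (hcomp le_rfl) (hpair hjk)
    rw [matA_apply_of_ne hjk]
    constructor <;> linarith
  · obtain ⟨hlow, hup⟩ :=
      supersetSum_mem_bounds (by omega) hrn (hcomp one_le_two) (hsingleton j)
    rw [matA_apply_self]
    constructor <;> linarith
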